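/- arXiv:1001.1949 — 6 statements merged into one kernel-verified Lean document; each statement's English description precedes it below -/
import Mathlib

section
/- Let p be an odd prime. The set S = {x ∈ ℤ_p | x^(p−1) = 1} of (p−1)-st roots of unity in the ring ℤ_p of p-adic integers is finite with exactly p − 1 elements, and the product of all elements of S equals −1. -/
/-!
By Fermat, every nonzero residue mod `p` is a simple root of `X ^ (p - 1) - 1`, so Hensel's lemma
lifts it to a root in `ℤ_p`. Hence `X ^ (p - 1) - 1` has as many distinct roots in the domain `ℤ_p`
as its degree; it therefore splits, and the product of its roots is read off its constant term:
`(-1) ^ p = -1`.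
-/

open Polynomial Finset

namespace Polynomial

theorem prod_nthRootsFinset_of_card_eq {R : Type*} [CommRing R] [IsDomain R] {n : ℕ}
    (hn : 0 < n) (a : R) (hcard : #(nthRootsFinset n a) = n) :
    ∏ x ∈ nthRootsFinset n a, x = (-1) ^ (n + 1) * a := by
  classical
  rw [nthRootsFinset_def] at hcard ⊢
  have hroots : Multiset.card (nthRoots n a) = n :=
    (card_nthRoots n a).antisymm (hcard.symm.trans_le (Multiset.toFinset_card_le _))
  have hnodup : (nthRoots n a).Nodup :=
    Multiset.toFinset_card_eq_card_iff_nodup.mp (hcard.trans hroots.symm)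
  have hsplits : (X ^ n - C a).Splits := by
    rwa [splits_iff_card_roots, natDegree_X_pow_sub_C]
  have hcoeff : -a = (-1) ^ n * (nthRoots n a).prod := by
    simpa [nthRoots, coeff_X_pow, hn.ne, natDegree_X_pow_sub_C] using
      hsplits.coeff_zero_eq_prod_roots_of_monic (monic_X_pow_sub_C a hn.ne')
  have hprod : ∏ x ∈ (nthRoots n a).toFinset, x = (nthRoots n a).prod := by
    rw [Finset.prod_eq_multiset_prod, Multiset.toFinset_val, hnodup.dedup, Multiset.map_id']
  have hsq : ((-1 : R) ^ n) ^ 2 = 1 := by rw [← pow_mul, mul_comm, pow_mul, neg_one_sq, one_pow]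
  rw [hprod]
  linear_combination (-(-1) ^ n) * hcoeff - (nthRoots n a).prod * hsq

end Polynomial

namespace PadicInt

variable {p : ℕ} [Fact p.Prime]

theorem toZMod_eq_zero_iff_norm_lt_one {x : ℤ_[p]} : toZMod x = 0 ↔ ‖x‖ < 1 := by
  rw [← RingHom.mem_ker, ker_toZMod, IsLocalRing.mem_maximalIdeal, mem_nonunits]

theorem norm_eq_one_of_toZMod_ne_zero {x : ℤ_[p]} (hx : toZMod x ≠ 0) : ‖x‖ = 1 :=
  (norm_le_one x).antisymm (not_lt.mp (toZMod_eq_zero_iff_norm_lt_one.not.mp hx))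

theorem exists_eval_eq_zero_toZMod_eq {F : ℤ_[p][X]} {a : ℤ_[p]}
    (ha : toZMod (F.eval a) = 0) (hda : toZMod (F.derivative.eval a) ≠ 0) :
    ∃ z, F.eval z = 0 ∧ toZMod z = toZMod a := by
  have hd : ‖F.derivative.eval a‖ = 1 := norm_eq_one_of_toZMod_ne_zero hda
  obtain ⟨z, hz, hza, -⟩ := hensels_lemma (F := F) (a := a)
    (by simpa [hd] using toZMod_eq_zero_iff_norm_lt_one.mp ha)
  refine ⟨z, by simpa using hz, ?_⟩
  rw [← sub_eq_zero, ← map_sub, toZMod_eq_zero_iff_norm_lt_one]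
  simpa [hd] using hza

theorem exists_pow_eq_one_toZMod_eq {n : ℕ} (hn : (n : ZMod p) ≠ 0) {k : ZMod p}
    (hk : k ^ n = 1) : ∃ x : ℤ_[p], x ^ n = 1 ∧ toZMod x = k := by
  obtain ⟨a, rfl⟩ := ZMod.ringHom_surjective toZMod k
  have hk0 : toZMod a ≠ 0 := by
    intro h
    rw [h, zero_pow (by rintro rfl; exact hn Nat.cast_zero)] at hk
    exact zero_ne_one hk
  obtain ⟨z, hz, hza⟩ := exists_eval_eq_zero_toZMod_eq (F := X ^ n - 1) (a := a)
    (by simp [hk]) (by simpa [derivative_X_pow] using mul_ne_zero hn (pow_ne_zero (n - 1) hk0))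
  exact ⟨z, by simpa [sub_eq_zero] using hz, hza⟩

theorem card_nthRootsFinset_sub_one : #(nthRootsFinset (p - 1) (1 : ℤ_[p])) = p - 1 := by
  classical
  have hp : p.Prime := Fact.out
  refine le_antisymm ?_ ?_
  · rw [nthRootsFinset_def]
    exact (Multiset.toFinset_card_le _).trans (card_nthRoots _ _)
  · have hunit : ((p - 1 : ℕ) : ZMod p) ≠ 0 := by
      rw [Nat.cast_sub hp.one_le, ZMod.natCast_self, Nat.cast_one, zero_sub]
      exact neg_ne_zero.mpr one_ne_zero
    calc p - 1 = #(univ.erase (0 : ZMod p)) := by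
          rw [card_erase_of_mem (mem_univ _), card_univ, ZMod.card]
      _ ≤ #(nthRootsFinset (p - 1) (1 : ℤ_[p])) := card_le_card_of_surjOn toZMod fun k hk => by
          obtain ⟨x, hx, rfl⟩ :=
            exists_pow_eq_one_toZMod_eq hunit (ZMod.pow_card_sub_one_eq_one (ne_of_mem_erase hk))
          exact ⟨x, (mem_nthRootsFinset (Nat.sub_pos_of_lt hp.one_lt) 1).mpr hx, rfl⟩

end PadicInt

/-- Let `p` be an odd prime.  The set `S = {x ∈ ℤ_p | x ^ (p - 1) = 1}` of
`(p-1)`-st roots of unity in the `p`-adic integers is finite with exactly `p - 1` elements,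
and the product of all of its elements equals `-1`. -/
theorem stmt1 (p : ℕ) [hp : Fact p.Prime] (hodd : Odd p) :
    ∃ hfin : ({x : ℤ_[p] | x ^ (p - 1) = 1}).Finite,
      hfin.toFinset.card = p - 1 ∧ (∏ x ∈ hfin.toFinset, x) = -1 := by
  have hp1 : 0 < p - 1 := Nat.sub_pos_of_lt hp.out.one_lt
  have hS : {x : ℤ_[p] | x ^ (p - 1) = 1} = nthRootsFinset (p - 1) (1 : ℤ_[p]) :=
    (nthRootsFinset_toSet hp1 1).symm
  have hfin : ({x : ℤ_[p] | x ^ (p - 1) = 1}).Finite := hS ▸ (nthRootsFinset _ _).finite_toSet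
  have hT : hfin.toFinset = nthRootsFinset (p - 1) (1 : ℤ_[p]) :=
    Finset.coe_inj.mp (by rw [Set.Finite.coe_toFinset, hS])
  refine ⟨hfin, ?_, ?_⟩
  · rw [hT, PadicInt.card_nthRootsFinset_sub_one]
  · rw [hT, prod_nthRootsFinset_of_card_eq hp1 1 PadicInt.card_nthRootsFinset_sub_one,
      Nat.sub_add_cancel hp.out.one_lt.le, hodd.neg_one_pow, mul_one]
end

section
/- Let R be a commutative ring, let d ≥ 1 and N ≥ 1, and let A = R[x₁,…,x_d]/(x₁^N,…,x_d^N). Let the symmetric group Σ_d act on A by permuting the variables x₁,…,x_d. Then the R-submodule of Σ_d-invariant elements of A is a free R-module whose basis consists of the images in A of the products σ₁^{β₁}⋯σ_d^{β_d}, where σ_k denotes the k-th elementary symmetric polynomial in x₁,…,x_d and β = (β₁,…,β_d) ranges over all tuples of natural numbers with β₁ + ⋯ + β_d < N. -/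
/-!
Every class in `A` has a unique representative all of whose exponents are `< N`, so the
representative of an invariant class is a symmetric polynomial. By the fundamental theorem of
symmetric polynomials it is a unique combination `∑ c_β σ^β`. In the lexicographic order the
leading monomial of `σ^β` is `x^(β₁+⋯+β_d, β₂+⋯+β_d, …, β_d)`, and these are distinct, so the
leading monomial of the combination is that of its lex-largest term. Its `x₁`-exponent, which
is `< N`, is `|β| = β₁+⋯+β_d`, the largest `|β|` occurring; so only `β` with `|β| < N` occur.
Conversely each such `σ^β` has all exponents `≤ |β| < N`, so their classes stay independent in `A`.
-/

open MvPolynomial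

noncomputable section

variable (R : Type*) [CommRing R] (d N : ℕ)

/-- The ideal `(x₁^N, …, x_d^N)` of `R[x₁,…,x_d]`. -/
def truncIdeal : Ideal (MvPolynomial (Fin d) R) :=
  Ideal.span (Set.range fun i : Fin d => (X i : MvPolynomial (Fin d) R) ^ N)

lemma truncIdeal_rename_eq_zero (σ : Equiv.Perm (Fin d)) :
    ∀ a ∈ truncIdeal R d N,
      ((Ideal.Quotient.mkₐ R (truncIdeal R d N)).comp
        (rename (σ : Fin d → Fin d))) a = 0 := by
  intro a ha
  have hmap : Ideal.map (rename (σ : Fin d → Fin d) :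
      MvPolynomial (Fin d) R →ₐ[R] MvPolynomial (Fin d) R) (truncIdeal R d N) ≤
      truncIdeal R d N := by
    rw [truncIdeal, Ideal.map_span]
    refine Ideal.span_le.2 ?_
    rintro _ ⟨_, ⟨i, rfl⟩, rfl⟩
    have h1 : (rename (σ : Fin d → Fin d)) ((X i : MvPolynomial (Fin d) R) ^ N) =
        (X (σ i) : MvPolynomial (Fin d) R) ^ N := by
      simp
    rw [h1]
    exact Ideal.subset_span (Set.mem_range_self (σ i))
  have h : rename (σ : Fin d → Fin d) a ∈ truncIdeal R d N :=
    hmap (Ideal.mem_map_of_mem _ ha)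
  show Ideal.Quotient.mkₐ R (truncIdeal R d N) (rename (σ : Fin d → Fin d) a) = 0
  rw [Ideal.Quotient.mkₐ_eq_mk]
  exact Ideal.Quotient.eq_zero_iff_mem.2 h

/-- The action of a permutation `σ ∈ Σ_d` on `R[x₁,…,x_d]/(x₁^N,…,x_d^N)`, induced by
permuting the variables. -/
def permAct (σ : Equiv.Perm (Fin d)) :
    (MvPolynomial (Fin d) R ⧸ truncIdeal R d N) →ₐ[R]
      (MvPolynomial (Fin d) R ⧸ truncIdeal R d N) :=
  Ideal.Quotient.liftₐ (truncIdeal R d N)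
    ((Ideal.Quotient.mkₐ R (truncIdeal R d N)).comp (rename (σ : Fin d → Fin d)))
    (truncIdeal_rename_eq_zero R d N σ)

/-- The `R`-submodule of `Σ_d`-invariant elements of `R[x₁,…,x_d]/(x₁^N,…,x_d^N)`. -/
def invariantsSubmodule : Submodule R (MvPolynomial (Fin d) R ⧸ truncIdeal R d N) :=
  ⨅ σ : Equiv.Perm (Fin d),
    LinearMap.eqLocus (permAct R d N σ).toLinearMap LinearMap.id

theorem Finsupp.Lex.apply_le_apply_of_le_of_isBot {α : Type*} [LinearOrder α]
    {x y : Lex (α →₀ ℕ)} (h : x ≤ y) {a : α} (ha : IsBot a) : ofLex x a ≤ ofLex y a := by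
  obtain h | rfl := h.lt_or_eq
  · obtain ⟨i, hlt, hi⟩ := Finsupp.Lex.lt_iff.1 h
    obtain rfl | hai := (ha i).eq_or_lt
    · exact hi.le
    · exact (hlt a hai).le
  · exact le_rfl

namespace MvPolynomial

def boundedExponents (ι : Type*) (n : ℕ) : Set (ι →₀ ℕ) := {α | ∀ i, α i < n}

section

variable {R} {σ : Type*} {N}

theorem mem_span_X_pow_iff {p : MvPolynomial σ R} :
    p ∈ Ideal.span (Set.range fun i : σ => (X i : MvPolynomial σ R) ^ N) ↔
      ∀ α ∈ p.support, ∃ i, N ≤ α i := by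
  have : (Set.range fun i : σ => (X i : MvPolynomial σ R) ^ N) =
      (fun s => monomial s (1 : R)) '' Set.range fun i => Finsupp.single i N := by
    rw [← Set.range_comp]
    simp [Function.comp_def, X_pow_eq_monomial]
  simp [this, mem_ideal_span_monomial_image, Finsupp.single_le_iff]

theorem isCompl_restrictSupport_span_X_pow :
    IsCompl (restrictSupport R (boundedExponents σ N))
      ((Ideal.span (Set.range fun i : σ => (X i : MvPolynomial σ R) ^ N)).restrictScalars R) := by
  constructor
  · refine Submodule.disjoint_def.2 fun p hp hI => ?_
    by_contra h0
    obtain ⟨α, hα⟩ := support_nonempty.2 h0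
    obtain ⟨i, hi⟩ := mem_span_X_pow_iff.1 hI α hα
    exact hi.not_gt (hp hα i)
  · refine codisjoint_iff.2 (eq_top_iff.2 fun p _ => ?_)
    rw [← p.support_sum_monomial_coeff]
    refine Submodule.sum_mem _ fun α _ => ?_
    by_cases hα : α ∈ boundedExponents σ N
    · exact Submodule.mem_sup_left ((monomial_mem_restrictSupport R).2 (Or.inl hα))
    · refine Submodule.mem_sup_right (mem_span_X_pow_iff.2 fun β hβ => ?_)
      obtain rfl := Finset.mem_singleton.1 (support_monomial_subset hβ)
      simpa [boundedExponents] using hα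

theorem rename_mem_restrictSupport_boundedExponents (e : Equiv.Perm σ) {p : MvPolynomial σ R}
    (hp : p ∈ restrictSupport R (boundedExponents σ N)) :
    rename e p ∈ restrictSupport R (boundedExponents σ N) := by
  classical
  rw [mem_restrictSupport_iff] at hp ⊢
  intro α hα
  rw [Finset.mem_coe, support_rename_of_injective e.injective] at hα
  obtain ⟨γ, hγ, rfl⟩ := Finset.mem_image.1 hα
  intro i
  rw [Finsupp.mapDomain_equiv_apply]
  exact hp hγ _

theorem degreeOf_esymm_le [Fintype σ] (i : σ) (n : ℕ) : degreeOf i (esymm σ R n) ≤ 1 := by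
  classical
  rw [esymm_eq_sum_monomial]
  refine (degreeOf_sum_le _ _ _).trans (Finset.sup_le fun t _ => ?_)
  refine degreeOf_le_iff.2 fun m hm => ?_
  obtain rfl := Finset.mem_singleton.1 (support_monomial_subset hm)
  simp only [Finsupp.finsetSum_apply, Finsupp.single_apply, Finset.sum_ite_eq']
  split_ifs <;> simp

theorem degreeOf_prod_esymm_pow_le [Fintype σ] {n : ℕ} (i : σ) (β : Fin n → ℕ) :
    degreeOf i (∏ k : Fin n, esymm σ R (k + 1) ^ β k) ≤ ∑ k, β k := by
  refine (degreeOf_prod_le _ _ _).trans (Finset.sum_le_sum fun k _ => ?_)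
  calc degreeOf i (esymm σ R (k + 1) ^ β k) ≤ β k * degreeOf i (esymm σ R (k + 1)) :=
        degreeOf_pow_le _ _ _
    _ ≤ β k := by simpa using Nat.mul_le_mul_left (β k) (degreeOf_esymm_le i (k + 1))

theorem prod_esymm_pow_mem_restrictSupport [Fintype σ] {n : ℕ} {β : Fin n → ℕ}
    (hβ : ∑ k, β k < N) :
    ∏ k : Fin n, esymm σ R (k + 1) ^ β k ∈ restrictSupport R (boundedExponents σ N) :=
  fun _ hα i =>
    (monomial_le_degreeOf i hα).trans_lt ((degreeOf_prod_esymm_pow_le i β).trans_lt hβ)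

theorem coe_esymmAlgHom_monomial [Fintype σ] {n : ℕ} (t : Fin n →₀ ℕ) (r : R) :
    (esymmAlgHom σ R n (monomial t r) : MvPolynomial σ R) =
      r • ∏ k : Fin n, esymm σ R (k + 1) ^ t k := by
  rw [esymmAlgHom_apply, aeval_monomial, Algebra.smul_def,
    Finsupp.prod_fintype _ _ fun _ => pow_zero _]

variable (R) in
theorem linearIndependent_prod_esymm_pow [Fintype σ] {n : ℕ} (hn : n ≤ Fintype.card σ) :
    LinearIndependent R fun β : Fin n → ℕ => ∏ k : Fin n, esymm σ R (k + 1) ^ β k := by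
  have hinj : Function.Injective
      ((symmetricSubalgebra σ R).val.toLinearMap ∘ₗ (esymmAlgHom σ R n).toLinearMap) :=
    Subtype.val_injective.comp (esymmAlgHom_injective R hn)
  have := ((basisMonomials (Fin n) R).linearIndependent.map' _
    (LinearMap.ker_eq_bot.2 hinj)).comp _ Finsupp.equivFunOnFinite.symm.injective
  simpa [Function.comp_def, coe_esymmAlgHom_monomial] using this

open AddMonoidAlgebra Fin in
theorem sum_lt_of_esymmAlgHom_mem_restrictSupport {n m : ℕ} (hnm : n ≤ m) (hm : 0 < m)
    {q : MvPolynomial (Fin n) R}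
    (hq : (esymmAlgHom (Fin m) R n q).val ∈ restrictSupport R (boundedExponents (Fin m) N))
    {t : Fin n →₀ ℕ} (ht : t ∈ q.support) : ∑ i, t i < N := by
  classical
  set f := fun s => esymmAlgHomMonomial (Fin m) s (q.coeff s)
  have hsum : (esymmAlgHom (Fin m) R n q).val = ∑ s ∈ q.support, f s := by
    conv_lhs => rw [q.as_sum]
    rw [map_sum, AddSubmonoidClass.coe_finsetSum]
    rfl
  have hdeg : ∀ s ∈ q.support, ofLex ((f s).supDegree toLex) = accumulate n m s :=
    fun s hs => supDegree_esymmAlgHomMonomial (mem_support_iff.1 hs) s hnm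
  have hzero : ∀ s : Fin n →₀ ℕ, accumulate n m s ⟨0, hm⟩ = ∑ i, s i := fun s => by
    simp [accumulate_apply]
  obtain ⟨s, hs, hmax⟩ := q.support.exists_max_image (fun s => (f s).supDegree toLex) ⟨t, ht⟩
  have hlt : ∀ s' ∈ q.support, s' ≠ s → (f s').supDegree toLex < (f s).supDegree toLex :=
    fun s' hs' hne => (hmax s' hs').lt_of_ne fun h => hne <| DFunLike.ext' <|
      accumulate_injective hnm (by rw [← hdeg s' hs', ← hdeg s hs, h])
  obtain ⟨hsd, hlc⟩ := supDegree_leadingCoeff_sum_eq hs hlt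
  rw [← hsum] at hsd hlc
  have hlead : ofLex ((f s).supDegree toLex) ∈ (esymmAlgHom (Fin m) R n q).val.support := by
    have hne : leadingCoeff toLex (esymmAlgHom (Fin m) R n q).val ≠ 0 := by
      rw [hlc, leadingCoeff_esymmAlgHomMonomial s hnm]
      exact mem_support_iff.1 hs
    have hinv : Function.invFun toLex ((f s).supDegree toLex) = ofLex ((f s).supDegree toLex) :=
      toLex.injective (Function.invFun_eq ⟨_, rfl⟩)
    rw [leadingCoeff, hsd, hinv] at hne
    exact mem_support_iff.2 hne
  calc ∑ i, t i = accumulate n m t ⟨0, hm⟩ := (hzero t).symm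
    _ ≤ accumulate n m s ⟨0, hm⟩ := by
      rw [← hdeg t ht, ← hdeg s hs]
      exact Finsupp.Lex.apply_le_apply_of_le_of_isBot (hmax t ht) fun j => Nat.zero_le j.1
    _ < N := by rw [← hdeg s hs]; exact hq hlead _

theorem IsSymmetric.mem_span_prod_esymm_pow {d : ℕ} (hd : 0 < d) {p : MvPolynomial (Fin d) R}
    (hp : p.IsSymmetric) (hb : p ∈ restrictSupport R (boundedExponents (Fin d) N)) :
    p ∈ Submodule.span R (Set.range fun β : {β : Fin d → ℕ // ∑ i, β i < N} =>
      ∏ k : Fin d, esymm (Fin d) R (k + 1) ^ β.1 k) := by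
  obtain ⟨q, hq⟩ := (esymmAlgHom_fin_bijective R d).2 ⟨p, hp⟩
  obtain rfl : (esymmAlgHom (Fin d) R d q).val = p := congrArg Subtype.val hq
  rw [q.as_sum, map_sum, AddSubmonoidClass.coe_finsetSum]
  refine Submodule.sum_mem _ fun t ht => ?_
  rw [coe_esymmAlgHom_monomial]
  exact Submodule.smul_mem _ _ (Submodule.subset_span
    ⟨⟨t, sum_lt_of_esymmAlgHom_mem_restrictSupport le_rfl hd hb ht⟩, rfl⟩)

end

end MvPolynomial

theorem isCompl_restrictSupport_truncIdeal :
    IsCompl (restrictSupport R (boundedExponents (Fin d) N))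
      ((truncIdeal R d N).restrictScalars R) :=
  isCompl_restrictSupport_span_X_pow

theorem permAct_mk (σ : Equiv.Perm (Fin d)) (p : MvPolynomial (Fin d) R) :
    permAct R d N σ (Ideal.Quotient.mk _ p) = Ideal.Quotient.mk _ (rename σ p) := rfl

theorem mem_invariantsSubmodule_iff {x : MvPolynomial (Fin d) R ⧸ truncIdeal R d N} :
    x ∈ invariantsSubmodule R d N ↔ ∀ σ, permAct R d N σ x = x := by
  simp [invariantsSubmodule]

theorem mk_mem_invariantsSubmodule_of_isSymmetric {p : MvPolynomial (Fin d) R}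
    (hp : p.IsSymmetric) : Ideal.Quotient.mk _ p ∈ invariantsSubmodule R d N :=
  (mem_invariantsSubmodule_iff R d N).2 fun σ => by rw [permAct_mk, hp σ]

theorem isSymmetric_of_mk_mem_invariantsSubmodule {p : MvPolynomial (Fin d) R}
    (hb : p ∈ restrictSupport R (boundedExponents (Fin d) N))
    (hp : Ideal.Quotient.mk _ p ∈ invariantsSubmodule R d N) : p.IsSymmetric := by
  intro σ
  have hσ := (mem_invariantsSubmodule_iff R d N).1 hp σ
  rw [permAct_mk, Ideal.Quotient.eq] at hσ
  exact sub_eq_zero.1 <| Submodule.disjoint_def.1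
    (isCompl_restrictSupport_truncIdeal R d N).disjoint _
    (sub_mem (rename_mem_restrictSupport_boundedExponents σ hb) hb) hσ

theorem linearIndependent_mk_prod_esymm_pow :
    LinearIndependent R fun β : {β : Fin d → ℕ // ∑ i, β i < N} =>
      Ideal.Quotient.mk (truncIdeal R d N) (∏ k : Fin d, esymm (Fin d) R (k + 1) ^ β.1 k) := by
  refine ((linearIndependent_prod_esymm_pow R (Fintype.card_fin d).ge).comp Subtype.val
    Subtype.val_injective).map (f := (Ideal.Quotient.mkₐ R (truncIdeal R d N)).toLinearMap) ?_
  refine ((isCompl_restrictSupport_truncIdeal R d N).disjoint.mono_right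
    fun _ => Ideal.Quotient.eq_zero_iff_mem.1).mono_left ?_
  exact Submodule.span_le.2 <| Set.range_subset_iff.2 fun β =>
    prod_esymm_pow_mem_restrictSupport β.2

theorem invariantsSubmodule_le_span (hd : 0 < d) :
    invariantsSubmodule R d N ≤
      Submodule.span R (Set.range fun β : {β : Fin d → ℕ // ∑ i, β i < N} =>
        Ideal.Quotient.mk (truncIdeal R d N) (∏ k : Fin d, esymm (Fin d) R (k + 1) ^ β.1 k)) := by
  intro x hx
  obtain ⟨p₀, rfl⟩ := Ideal.Quotient.mk_surjective x
  obtain ⟨p, y, hp, hy, rfl⟩ := Submodule.codisjoint_iff_exists_add_eq.1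
    (isCompl_restrictSupport_truncIdeal R d N).codisjoint p₀
  rw [map_add, Ideal.Quotient.eq_zero_iff_mem.2 hy, add_zero] at hx ⊢
  have := Submodule.mem_map_of_mem (f := (Ideal.Quotient.mkₐ R (truncIdeal R d N)).toLinearMap)
    ((isSymmetric_of_mk_mem_invariantsSubmodule R d N hp hx).mem_span_prod_esymm_pow hd hp)
  rwa [Submodule.map_span, ← Set.range_comp] at this

theorem stmt2 (hd : 1 ≤ d) :
    ∃ b : Module.Basis {β : Fin d → ℕ // (∑ i, β i) < N} R (invariantsSubmodule R d N),
      ∀ β : {β : Fin d → ℕ // (∑ i, β i) < N},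
        (b β : MvPolynomial (Fin d) R ⧸ truncIdeal R d N) =
          Ideal.Quotient.mk (truncIdeal R d N)
            (∏ k : Fin d, (esymm (Fin d) R (k.1 + 1)) ^ (β.1 k)) := by
  have hspan := le_antisymm
    (Submodule.span_le.2 <| Set.range_subset_iff.2 fun β =>
      mk_mem_invariantsSubmodule_of_isSymmetric R d N <|
        (mem_symmetricSubalgebra _).1 <| Subalgebra.prod_mem _ fun k _ =>
          Subalgebra.pow_mem _ (esymm_isSymmetric _ _ _) _)
    (invariantsSubmodule_le_span R d N hd)
  exact ⟨(Module.Basis.span (linearIndependent_mk_prod_esymm_pow R d N)).map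
    (LinearEquiv.ofEq _ _ hspan), fun β => by simp [Module.Basis.span_apply]⟩

end
end

section
/- Let K be a field and A a finite-dimensional commutative local K-algebra with maximal ideal m, such that the composite map K → A → A/m is bijective. Then A admits a Frobenius form over K if and only if the socle of A is one-dimensional as a K-vector space. -/
/-- A Frobenius form on a commutative `K`-algebra `A` is a `K`-linear map `θ : A → K` such
that the `K`-linear map `A → Hom_K(A, K)` sending `a` to `b ↦ θ (a * b)` is bijective. -/
def IsFrobeniusForm {K A : Type*} [CommRing K] [CommRing A] [Algebra K A]
    (θ : A →ₗ[K] K) : Prop :=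
  Function.Bijective fun a : A => θ ∘ₗ LinearMap.mulLeft K a

/-- The socle of a commutative local `K`-algebra `A`, i.e. the annihilator of the maximal
ideal, regarded as a `K`-submodule of `A`. -/
def socleSubmodule (K A : Type*) [CommRing K] [CommRing A] [Algebra K A] [IsLocalRing A] :
    Submodule K A where
  carrier := {a : A | ∀ x ∈ IsLocalRing.maximalIdeal A, a * x = 0}
  add_mem' := by
    intro a b ha hb x hx
    rw [add_mul, ha x hx, hb x hx, add_zero]
  zero_mem' := by
    intro x hx
    rw [zero_mul]
  smul_mem' := by
    intro c a ha x hx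
    rw [smul_mul_assoc, ha x hx, smul_zero]

/-!
A form `θ` is Frobenius iff `ker θ` contains no nonzero ideal, and since the maximal ideal of an
Artinian local ring is nilpotent, every nonzero ideal meets the socle. When the residue field is
`K`, the socle is a `K`-module on which `A` acts through scalars, so `θ` restricts injectively
to it and it is at most one-dimensional; conversely, any form not vanishing on a generator of a
one-dimensional socle is nonzero on every nonzero ideal.
-/

open IsLocalRing

lemma isFrobeniusForm_iff_forall_ne_zero {K A : Type*} [Field K] [CommRing A] [Algebra K A]
    [FiniteDimensional K A] (θ : A →ₗ[K] K) :
    IsFrobeniusForm θ ↔ ∀ a : A, a ≠ 0 → ∃ b, θ (a * b) ≠ 0 := by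
  change Function.Bijective ((LinearMap.mul K A).compr₂ θ) ↔ _
  rw [Function.Bijective, ← LinearMap.injective_iff_surjective_of_finrank_eq_finrank
    Subspace.dual_finrank_eq.symm, and_self, injective_iff_map_eq_zero]
  refine forall_congr' fun a => ?_
  rw [← not_imp_not, LinearMap.ext_iff]
  simp

lemma exists_mul_ne_zero_forall_mem_mul_eq_zero {R : Type*} [CommRing R] {I : Ideal R} {a : R}
    (ha : a ≠ 0) {n : ℕ} (hn : ∀ y ∈ I ^ n, a * y = 0) :
    ∃ x, a * x ≠ 0 ∧ ∀ y ∈ I, a * x * y = 0 := by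
  induction n generalizing a with
  | zero => exact absurd (by simpa using hn 1 (by simp)) ha
  | succ n ih =>
    by_cases hI : ∀ y ∈ I, a * y = 0
    · exact ⟨1, by rwa [mul_one], by simpa using hI⟩
    push Not at hI
    obtain ⟨y, hy, hay⟩ := hI
    obtain ⟨x, hx, hxI⟩ := ih hay fun z hz => by
      rw [mul_assoc]
      exact hn _ (by rw [pow_succ']; exact Ideal.mul_mem_mul hy hz)
    exact ⟨y * x, by rwa [← mul_assoc], by simpa only [mul_assoc] using hxI⟩

section

variable {K A : Type*} [CommRing A] [IsLocalRing A]

variable (K) in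
lemma exists_mul_ne_zero_mem_socleSubmodule [CommRing K] [Algebra K A]
    [IsArtinianRing A] {a : A} (ha : a ≠ 0) :
    ∃ x, a * x ≠ 0 ∧ a * x ∈ socleSubmodule K A := by
  obtain ⟨n, hn⟩ := (isArtinianRing_iff_isNilpotent_maximalIdeal A).mp ‹_›
  exact exists_mul_ne_zero_forall_mem_mul_eq_zero ha (n := n) fun y hy => by
    rw [hn, Ideal.zero_eq_bot, Ideal.mem_bot] at hy
    rw [hy, mul_zero]

lemma finrank_socleSubmodule_pos [Field K] [Algebra K A] [FiniteDimensional K A] :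
    0 < Module.finrank K (socleSubmodule K A) := by
  have : IsArtinianRing A := isArtinian_of_tower K inferInstance
  obtain ⟨x, hx, hmem⟩ := exists_mul_ne_zero_mem_socleSubmodule K (one_ne_zero : (1 : A) ≠ 0)
  exact Module.finrank_pos_iff_exists_ne_zero.mpr ⟨⟨_, hmem⟩, by simpa using hx⟩

lemma exists_mul_eq_smul_of_mem_socleSubmodule [CommRing K] [Algebra K A]
    (hres : Function.Surjective fun c : K =>
      Ideal.Quotient.mk (maximalIdeal A) (algebraMap K A c))
    {t : A} (ht : t ∈ socleSubmodule K A) (b : A) : ∃ c : K, t * b = c • t := by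
  obtain ⟨c, hc⟩ := hres (Ideal.Quotient.mk _ b)
  have hmem : b - algebraMap K A c ∈ maximalIdeal A := by
    rw [← Ideal.Quotient.eq_zero_iff_mem, map_sub, ← hc, sub_self]
  refine ⟨c, ?_⟩
  rw [Algebra.smul_def, mul_comm _ t, ← sub_eq_zero, ← mul_sub]
  exact ht _ hmem

lemma finrank_socleSubmodule_le_one_of_isFrobeniusForm [Field K] [Algebra K A]
    [FiniteDimensional K A]
    (hres : Function.Surjective fun c : K =>
      Ideal.Quotient.mk (maximalIdeal A) (algebraMap K A c))
    {θ : A →ₗ[K] K} (hθ : IsFrobeniusForm θ) :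
    Module.finrank K (socleSubmodule K A) ≤ 1 := by
  have hinj : Function.Injective (θ ∘ₗ (socleSubmodule K A).subtype) := by
    refine (injective_iff_map_eq_zero _).mpr fun ⟨t, ht⟩ h0 => Subtype.ext ?_
    by_contra hne
    obtain ⟨b, hb⟩ := (isFrobeniusForm_iff_forall_ne_zero θ).mp hθ t hne
    obtain ⟨c, hc⟩ := exists_mul_eq_smul_of_mem_socleSubmodule hres ht b
    exact hb (by rw [hc, map_smul, show θ t = 0 from h0, smul_zero])
  simpa using LinearMap.finrank_le_finrank_of_injective hinj

lemma exists_isFrobeniusForm_of_finrank_socleSubmodule_eq_one [Field K] [Algebra K A]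
    [FiniteDimensional K A] (h : Module.finrank K (socleSubmodule K A) = 1) :
    ∃ θ : A →ₗ[K] K, IsFrobeniusForm θ := by
  have : IsArtinianRing A := isArtinian_of_tower K inferInstance
  obtain ⟨v, hv0, hv⟩ := finrank_eq_one_iff'.mp h
  obtain ⟨θ, hθ⟩ := Module.Projective.exists_dual_ne_zero K
    (show (v : A) ≠ 0 from fun h => hv0 (Subtype.ext h))
  refine ⟨θ, (isFrobeniusForm_iff_forall_ne_zero θ).mpr fun a ha => ?_⟩
  obtain ⟨x, hx, hmem⟩ := exists_mul_ne_zero_mem_socleSubmodule K ha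
  obtain ⟨c, hc⟩ := hv ⟨a * x, hmem⟩
  have hcv : c • (v : A) = a * x := congrArg Subtype.val hc
  have hc0 : c ≠ 0 := by
    rintro rfl
    exact hx (by rw [← hcv, zero_smul])
  exact ⟨x, by rw [← hcv, map_smul, smul_eq_mul]; exact mul_ne_zero hc0 hθ⟩

end

/-- Let `K` be a field and `A` a finite-dimensional commutative local
`K`-algebra with maximal ideal `m` such that the composite `K → A → A/m` is bijective.
Then `A` admits a Frobenius form over `K` if and only if the socle of `A` is one-dimensional
as a `K`-vector space. -/
theorem stmt5 (K A : Type*) [Field K] [CommRing A] [Algebra K A] [IsLocalRing A]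
    [FiniteDimensional K A]
    (hres : Function.Bijective fun c : K =>
      Ideal.Quotient.mk (IsLocalRing.maximalIdeal A) (algebraMap K A c)) :
    (∃ θ : A →ₗ[K] K, IsFrobeniusForm θ) ↔ Module.finrank K (socleSubmodule K A) = 1 := by
  refine ⟨fun ⟨θ, hθ⟩ => ?_, exists_isFrobeniusForm_of_finrank_socleSubmodule_eq_one⟩
  exact le_antisymm (finrank_socleSubmodule_le_one_of_isFrobeniusForm hres.2 hθ)
    finrank_socleSubmodule_pos
end

section
/- Let K be a field of characteristic p > 0 and A a finite-dimensional commutative local K-algebra with maximal ideal m, such that the composite map K → A → A/m is bijective. Let G be a finite group acting on A by K-algebra automorphisms, with p not dividing |G|. If θ is a G-invariant Frobenius form on A (i.e. θ(g•a) = θ(a) for all g ∈ G and a ∈ A), then the restriction of θ to the fixed subalgebra A^G = {a ∈ A | g•a = a for all g ∈ G} is a Frobenius form on A^G over K; in particular A^G is a duality algebra over K. -/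
/-- The fixed subalgebra `A^G` of an action of a group `G` on a commutative `K`-algebra `A`
by `K`-algebra automorphisms, given by a homomorphism `ρ : G →* (A ≃ₐ[K] A)`. -/
def fixedSubalgebra {K A G : Type*} [CommRing K] [CommRing A] [Algebra K A] [Group G]
    (ρ : G →* (A ≃ₐ[K] A)) : Subalgebra K A where
  carrier := {a : A | ∀ g : G, ρ g a = a}
  mul_mem' := by
    intro a b ha hb g
    rw [map_mul, ha g, hb g]
  add_mem' := by
    intro a b ha hb g
    rw [map_add, ha g, hb g]
  one_mem' := by
    intro g
    rw [map_one]
  algebraMap_mem' := by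
    intro c g
    exact (ρ g).commutes c

namespace IsFrobeniusForm

variable {K A : Type*} [CommRing K] [CommRing A] [Algebra K A] {θ : A →ₗ[K] K}

theorem comp_subalgebraVal_of_retraction (hθ : IsFrobeniusForm θ) (B : Subalgebra K A)
    (P : A →ₗ[K] B) (hP : ∀ b : B, P b = b) (hPmul : ∀ (b : B) (a : A), P (b * a) = b * P a)
    (hθP : ∀ a, θ (P a) = θ a) :
    IsFrobeniusForm (θ ∘ₗ B.val.toLinearMap) := by
  have hθPmul (b : B) (a : A) : θ (b * P a) = θ (b * a) := by
    rw [← hθP (b * a), hPmul, Subalgebra.coe_mul]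
  constructor
  · intro b₁ b₂ h
    refine Subtype.ext (hθ.injective (LinearMap.ext fun a => ?_))
    have h' := LinearMap.congr_fun h (P a)
    simp only [LinearMap.comp_apply, LinearMap.mulLeft_apply, AlgHom.toLinearMap_apply,
      Subalgebra.coe_val, Subalgebra.coe_mul] at h' ⊢
    rw [← hθPmul, h', hθPmul]
  · intro φ
    obtain ⟨a, ha⟩ := hθ.surjective (φ ∘ₗ P)
    refine ⟨P a, LinearMap.ext fun b => ?_⟩
    have ha' := LinearMap.congr_fun ha b
    simp only [LinearMap.comp_apply, LinearMap.mulLeft_apply, AlgHom.toLinearMap_apply,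
      Subalgebra.coe_val, Subalgebra.coe_mul, hP] at ha' ⊢
    rw [mul_comm, hθPmul, mul_comm, ha']

end IsFrobeniusForm

namespace fixedSubalgebra

variable {K A G : Type*} [CommRing K] [CommRing A] [Algebra K A] [Group G]
  (ρ : G →* (A ≃ₐ[K] A))

abbrev representation : Representation K G A := (AlgEquiv.toLinearMapHom K A).comp ρ

variable [Fintype G] [Invertible (Fintype.card G : K)]

noncomputable def reynolds : A →ₗ[K] fixedSubalgebra ρ :=
  LinearMap.codRestrict (fixedSubalgebra ρ).toSubmodule (representation ρ).averageMap
    (representation ρ).averageMap_invariant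

theorem coe_reynolds (a : A) :
    (reynolds ρ a : A) = ⅟(Fintype.card G : K) • ∑ g, ρ g a := by
  change (representation ρ).averageMap a = _
  simp [Representation.averageMap, GroupAlgebra.average, map_sum]

theorem reynolds_coe (b : fixedSubalgebra ρ) : reynolds ρ b = b :=
  Subtype.ext ((representation ρ).averageMap_id b b.2)

theorem reynolds_mul_left (b : fixedSubalgebra ρ) (a : A) :
    reynolds ρ (b * a) = b * reynolds ρ a := by
  ext
  simp only [coe_reynolds, Subalgebra.coe_mul, map_mul, b.2 _, Finset.mul_sum, mul_smul_comm]

theorem apply_reynolds_of_forall_apply_eq {M : Type*} [AddCommGroup M] [Module K M]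
    (f : A →ₗ[K] M) (hf : ∀ (g : G) (a : A), f (ρ g a) = f a) (a : A) :
    f (reynolds ρ a) = f a := by
  rw [coe_reynolds, map_smul, map_sum]
  simp only [hf, Finset.sum_const, Finset.card_univ, ← Nat.cast_smul_eq_nsmul K, smul_smul,
    invOf_mul_self, one_smul]

end fixedSubalgebra

theorem stmt6_general (K A G : Type*) [Field K] [CommRing A] [Algebra K A]
    (p : ℕ) [CharP K p]
    [Group G] [Fintype G] (hG : ¬ p ∣ Fintype.card G)
    (ρ : G →* (A ≃ₐ[K] A))
    (θ : A →ₗ[K] K) (hθ : IsFrobeniusForm θ)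
    (hinv : ∀ (g : G) (a : A), θ (ρ g a) = θ a) :
    IsFrobeniusForm (θ ∘ₗ (Subalgebra.val (fixedSubalgebra ρ)).toLinearMap) := by
  have : Invertible (Fintype.card G : K) :=
    invertibleOfNonzero ((CharP.cast_eq_zero_iff K p _).not.mpr hG)
  exact hθ.comp_subalgebraVal_of_retraction _ (fixedSubalgebra.reynolds ρ)
    (fixedSubalgebra.reynolds_coe ρ) (fixedSubalgebra.reynolds_mul_left ρ)
    (fixedSubalgebra.apply_reynolds_of_forall_apply_eq ρ θ hinv)

/-- Let `K` be a field of characteristic `p > 0` and `A` a finite-dimensional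
commutative local `K`-algebra with maximal ideal `m`, such that the composite `K → A → A/m` is
bijective.  Let `G` be a finite group acting on `A` by `K`-algebra automorphisms with
`p ∤ |G|`.  If `θ` is a `G`-invariant Frobenius form on `A`, then the restriction of `θ` to
the fixed subalgebra `A^G` is a Frobenius form on `A^G` over `K`. -/
theorem stmt6 (K A G : Type*) [Field K] [CommRing A] [Algebra K A] [IsLocalRing A]
    [FiniteDimensional K A] (p : ℕ) (hp : p.Prime) [CharP K p]
    (hres : Function.Bijective fun c : K =>
      Ideal.Quotient.mk (IsLocalRing.maximalIdeal A) (algebraMap K A c))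
    [Group G] [Fintype G] (hG : ¬ p ∣ Fintype.card G)
    (ρ : G →* (A ≃ₐ[K] A))
    (θ : A →ₗ[K] K) (hθ : IsFrobeniusForm θ)
    (hinv : ∀ (g : G) (a : A), θ (ρ g a) = θ a) :
    IsFrobeniusForm (θ ∘ₗ (Subalgebra.val (fixedSubalgebra ρ)).toLinearMap) :=
  stmt6_general K A G p hG ρ θ hθ hinv
end

section
/- Let p be a prime and let γ be the permutation of ℤ/p given by γ(x) = x + 1. A permutation σ of ℤ/p lies in the normalizer of the cyclic subgroup generated by γ in the symmetric group on ℤ/p if and only if there exist s ∈ (ℤ/p)ˣ and t ∈ ℤ/p such that σ(x) = s·x + t for all x ∈ ℤ/p. -/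
/-!
The normalizer condition says that `σ * γ * σ⁻¹` is again a translation `x ↦ x + c`, i.e.
`σ (x + 1) = σ x + c`, which forces `σ x = c * x + σ 0`; surjectivity of `σ` makes `c` a unit.
Conversely, conjugating the translation by `c` with `x ↦ s * x + t` gives the translation by
`s * c`, and every translation of `ℤ/n` is a power of `γ`.
-/

open Equiv (addRight)

theorem ZMod.mem_zpowers_addRight_one_iff {n : ℕ} {π : Equiv.Perm (ZMod n)} :
    π ∈ Subgroup.zpowers (addRight (1 : ZMod n)) ↔ ∃ c : ZMod n, addRight c = π := by
  simp only [Subgroup.mem_zpowers_iff, Equiv.zsmul_addRight, zsmul_one]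
  exact (ZMod.intCast_surjective.exists (p := fun c ↦ addRight c = π)).symm

theorem ZMod.eq_mul_add_of_apply_add_one {n : ℕ} {f : ZMod n → ZMod n} {c : ZMod n}
    (hf : ∀ x, f (x + 1) = f x + c) (x : ZMod n) : f x = c * x + f 0 := by
  obtain ⟨k, rfl⟩ := ZMod.intCast_surjective x
  induction k using Int.induction_on with
  | zero => simp
  | succ k ih => push_cast at ih ⊢; rw [hf, ih]; ring
  | pred k ih =>
    have h := hf ((-k - 1 : ℤ) : ZMod n)
    push_cast at h ih ⊢
    rw [sub_add_cancel] at h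
    linear_combination ih - h

theorem conj_addRight_of_apply_eq_mul_add {R : Type*} [Ring R] {σ : Equiv.Perm R} {s t : R}
    (hσ : ∀ x, σ x = s * x + t) (c : R) : σ * addRight c * σ⁻¹ = addRight (s * c) := by
  ext x
  obtain ⟨y, rfl⟩ := σ.surjective x
  simp only [Equiv.Perm.mul_apply, Equiv.Perm.coe_inv, Equiv.symm_apply_apply, Equiv.coe_addRight]
  rw [hσ, hσ, mul_add, add_right_comm]

theorem isUnit_of_perm_apply_eq_mul_add {R : Type*} [CommRing R] {σ : Equiv.Perm R} {s t : R}
    (hσ : ∀ x, σ x = s * x + t) : IsUnit s := by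
  obtain ⟨x, hx⟩ := σ.surjective (1 + t)
  rw [hσ, add_left_inj] at hx
  exact IsUnit.of_mul_eq_one x hx

theorem stmt10_general (p : ℕ) (σ : Equiv.Perm (ZMod p)) :
    σ ∈ Subgroup.normalizer (Subgroup.zpowers (Equiv.addRight (1 : ZMod p))) ↔
      ∃ (s : (ZMod p)ˣ) (t : ZMod p), ∀ x : ZMod p, σ x = (s : ZMod p) * x + t := by
  simp only [Subgroup.mem_normalizer_iff, ZMod.mem_zpowers_addRight_one_iff]
  constructor
  · intro h
    obtain ⟨c, hc⟩ := (h _).mp ⟨1, rfl⟩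
    have hσ : ∀ x, σ x = c * x + σ 0 :=
      ZMod.eq_mul_add_of_apply_add_one fun y ↦ by simpa using congr($hc (σ y)).symm
    exact ⟨(isUnit_of_perm_apply_eq_mul_add hσ).unit, σ 0, hσ⟩
  · rintro ⟨s, t, hσ⟩ π
    constructor
    · rintro ⟨c, rfl⟩
      exact ⟨s * c, (conj_addRight_of_apply_eq_mul_add hσ c).symm⟩
    · rintro ⟨d, hd⟩
      refine ⟨(↑s⁻¹ : ZMod p) * d, mul_left_cancel (a := σ) (mul_right_cancel (b := σ⁻¹) ?_)⟩
      rw [conj_addRight_of_apply_eq_mul_add hσ, Units.mul_inv_cancel_left, hd]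

/-- Let `p` be a prime and `γ` the translation `x ↦ x + 1` of `ℤ/p`.
A permutation `σ` of `ℤ/p` lies in the normalizer of the cyclic subgroup generated by `γ`
iff there are `s ∈ (ℤ/p)ˣ` and `t ∈ ℤ/p` with `σ x = s * x + t` for all `x`. -/
theorem stmt10 (p : ℕ) (hp : p.Prime) (σ : Equiv.Perm (ZMod p)) :
    σ ∈ Subgroup.normalizer (Subgroup.zpowers (Equiv.addRight (1 : ZMod p))) ↔
      ∃ (s : (ZMod p)ˣ) (t : ZMod p), ∀ x : ZMod p, σ x = (s : ZMod p) * x + t :=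
  stmt10_general p σ
end

section
/- Let p be an odd prime, let K be a finite field of cardinality q with p ∤ q, let a be the multiplicative order of q modulo p, and let m = ⌊d/a⌋ for a positive integer d. Then the p-adic valuation of the order of the group GL_d(K) equals m·v_p(q^a − 1) + v_p(m!). -/
private lemma padic_prod_range (p : ℕ) [hp : Fact p.Prime] (f : ℕ → ℕ) (n : ℕ)
    (hf : ∀ i < n, f i ≠ 0) :
    padicValNat p (∏ i ∈ Finset.range n, f i) = ∑ i ∈ Finset.range n, padicValNat p (f i) := by
  induction n with
  | zero => simp
  | succ n ih =>
      rw [Finset.prod_range_succ, Finset.sum_range_succ,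
        padicValNat.mul (Finset.prod_ne_zero_iff.2 fun i hi =>
          hf i (by have := Finset.mem_range.1 hi; omega)) (hf n (by omega)),
        ih (fun i hi => hf i (by omega))]

private lemma padic_factorial (p : ℕ) [hp : Fact p.Prime] (m : ℕ) :
    padicValNat p (Nat.factorial m) = ∑ k ∈ Finset.range m, padicValNat p (k + 1) := by
  induction m with
  | zero => simp
  | succ m ih =>
      rw [Nat.factorial_succ, Finset.sum_range_succ,
        padicValNat.mul (Nat.succ_ne_zero m) (Nat.factorial_ne_zero m), ih, add_comm]

/-- Let `p` be an odd prime, `K` a finite field of cardinality `q` with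
`p ∤ q`, `a` the multiplicative order of `q` modulo `p`, and `m = ⌊d/a⌋` for a positive
integer `d`.  Then `v_p(|GL_d(K)|) = m * v_p(q^a - 1) + v_p(m!)`. -/
theorem stmt12 (p : ℕ) (hp : p.Prime) (hodd : Odd p)
    (K : Type*) [Field K] [Fintype K]
    (q : ℕ) (hq : Fintype.card K = q) (hpq : ¬ p ∣ q)
    (d : ℕ) (hd : 0 < d)
    (a : ℕ) (ha : a = orderOf ((q : ZMod p)))
    (m : ℕ) (hm : m = d / a) :
    padicValNat p (Nat.card (Matrix.GeneralLinearGroup (Fin d) K)) =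
      m * padicValNat p (q ^ a - 1) + padicValNat p (Nat.factorial m) := by
  haveI : Fact p.Prime := ⟨hp⟩
  have hp2 : 2 ≤ p := hp.two_le
  have hq1 : 1 < q := hq ▸ Fintype.one_lt_card
  have hq0 : 0 < q := by omega
  -- basic facts about the order a
  have hqp0 : (q : ZMod p) ≠ 0 := by
    simpa [Ne, ZMod.natCast_eq_zero_iff] using hpq
  have hfin : IsOfFinOrder ((q : ZMod p)) := by
    refine isOfFinOrder_iff_pow_eq_one.2 ⟨p - 1, by omega, ?_⟩
    exact ZMod.pow_card_sub_one_eq_one hqp0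
  have ha0 : 0 < a := ha ▸ hfin.orderOf_pos
  -- p ∣ q^j - 1 ↔ a ∣ j
  have key : ∀ j : ℕ, p ∣ q ^ j - 1 ↔ a ∣ j := by
    intro j
    have h1 : 1 ≤ q ^ j := Nat.one_le_pow _ _ hq0
    rw [ha, orderOf_dvd_iff_pow_eq_one]
    constructor
    · intro h
      have := (ZMod.natCast_eq_zero_iff _ _).2 h
      push_cast [Nat.cast_sub h1] at this
      push_cast
      linear_combination this
    · intro h
      rw [← ZMod.natCast_eq_zero_iff]
      push_cast [Nat.cast_sub h1]
      push_cast at h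
      linear_combination h
  have hpqa : p ∣ q ^ a - 1 := (key a).2 dvd_rfl
  -- value at multiples of a (lifting the exponent)
  have hlte : ∀ k : ℕ, padicValNat p (q ^ (a * (k + 1)) - 1) =
      padicValNat p (q ^ a - 1) + padicValNat p (k + 1) := by
    intro k
    have h1 : 1 < q ^ a := Nat.one_lt_pow (by omega) hq1
    have := padicValNat.pow_sub_pow (p := p) hodd (x := q ^ a) (y := 1) h1
      (by simpa using hpqa) (by exact fun h => hpq (hp.dvd_of_dvd_pow h))
      (n := k + 1) (Nat.succ_ne_zero k)
    rw [pow_mul, ← this, one_pow]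
  -- cardinality of GL
  rw [Matrix.card_GL_field, hq]
  have hfactor : ∀ i : ℕ, i < d → q ^ d - q ^ i = q ^ i * (q ^ (d - i) - 1) := by
    intro i hi
    rw [Nat.mul_sub, mul_one, ← pow_add, Nat.add_sub_cancel' hi.le]
  rw [Fin.prod_univ_eq_prod_range (fun i => q ^ d - q ^ i) d]
  rw [Finset.prod_congr rfl (fun i hi => hfactor i (Finset.mem_range.1 hi))]
  rw [padic_prod_range p _ d (fun i hi => by
    have h1 : 1 < q ^ (d - i) := Nat.one_lt_pow (by omega) hq1
    have h2 : 0 < q ^ i := by positivity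
    exact Nat.mul_ne_zero (by omega) (by omega))]
  have hterm : ∀ i : ℕ, i < d → padicValNat p (q ^ i * (q ^ (d - i) - 1)) =
      padicValNat p (q ^ (d - i) - 1) := by
    intro i hi
    have h1 : 1 < q ^ (d - i) := Nat.one_lt_pow (by omega) hq1
    have h2 : 0 < q ^ i := by positivity
    rw [padicValNat.mul (by omega) (by omega),
      padicValNat.eq_zero_of_not_dvd (fun hdvd => hpq (hp.dvd_of_dvd_pow hdvd)), zero_add]
  rw [Finset.sum_congr rfl (fun i hi => hterm i (Finset.mem_range.1 hi))]
  -- reflect the sum: ∑_{i<d} f (d - i) = ∑_{i<d} f (i+1)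
  have hrefl : ∑ i ∈ Finset.range d, padicValNat p (q ^ (d - i) - 1)
      = ∑ i ∈ Finset.range d, padicValNat p (q ^ (i + 1) - 1) := by
    have := Finset.sum_range_reflect (fun i => padicValNat p (q ^ (i + 1) - 1)) d
    rw [← this]
    refine Finset.sum_congr rfl fun i hi => ?_
    have hi' := Finset.mem_range.1 hi
    have hx : d - 1 - i + 1 = d - i := by omega
    rw [hx]
  rw [hrefl]
  -- drop terms with a ∤ (i+1)
  rw [← Finset.sum_filter_of_ne (p := fun i => a ∣ (i + 1))
    (f := fun i => padicValNat p (q ^ (i + 1) - 1)) (fun i _ hne => by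
      by_contra hnd
      exact hne (padicValNat.eq_zero_of_not_dvd (fun hdvd => hnd ((key (i + 1)).1 hdvd))))]
  -- reindex the filtered sum by i ↦ (i+1)/a - 1
  have hbij : ∑ i ∈ (Finset.range d).filter (fun i => a ∣ (i + 1)),
      padicValNat p (q ^ (i + 1) - 1)
      = ∑ k ∈ Finset.range m, padicValNat p (q ^ (a * (k + 1)) - 1) := by
    refine Finset.sum_nbij' (fun i => (i + 1) / a - 1) (fun k => a * (k + 1) - 1)
      ?_ ?_ ?_ ?_ ?_
    · intro i hi
      simp only [Finset.mem_filter, Finset.mem_range] at hi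
      obtain ⟨hid, c, hc⟩ := hi
      simp only [Finset.mem_range]
      have hc1 : 1 ≤ c := by nlinarith
      rw [hc, Nat.mul_div_cancel_left _ ha0, hm]
      have hca : c * a = a * c := mul_comm c a
      have : c ≤ d / a := (Nat.le_div_iff_mul_le ha0).2 (by omega)
      omega
    · intro k hk
      simp only [Finset.mem_range] at hk
      simp only [Finset.mem_filter, Finset.mem_range]
      have h1 : 0 < a * (k + 1) := by positivity
      have hkle : a * (k + 1) ≤ d := by
        rw [hm] at hk
        have h3 := (Nat.le_div_iff_mul_le ha0).1 (by omega : k + 1 ≤ d / a)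
        have hca : (k + 1) * a = a * (k + 1) := mul_comm _ _
        omega
      exact ⟨by omega, ⟨k + 1, by omega⟩⟩
    · intro i hi
      simp only [Finset.mem_filter, Finset.mem_range] at hi
      obtain ⟨hid, c, hc⟩ := hi
      have hc1 : 1 ≤ c := by nlinarith
      show a * ((i + 1) / a - 1 + 1) - 1 = i
      rw [hc, Nat.mul_div_cancel_left _ ha0]
      have h2 : a * (c - 1 + 1) = a * c := by rw [Nat.sub_add_cancel hc1]
      have h3 : 0 < a * c := by positivity
      omega
    · intro k hk
      have h1 : 0 < a * (k + 1) := by positivity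
      have h2 : a * (k + 1) - 1 + 1 = a * (k + 1) := by omega
      show (a * (k + 1) - 1 + 1) / a - 1 = k
      rw [h2, Nat.mul_div_cancel_left _ ha0]
      omega
    · intro i hi
      simp only [Finset.mem_filter, Finset.mem_range] at hi
      obtain ⟨hid, c, hc⟩ := hi
      have hc1 : 1 ≤ c := by nlinarith
      have h2 : (i + 1) / a - 1 + 1 = c := by
        rw [hc, Nat.mul_div_cancel_left _ ha0]; omega
      show _ = padicValNat p (q ^ (a * ((i + 1) / a - 1 + 1)) - 1)
      rw [h2, ← hc]
  rw [hbij, Finset.sum_congr rfl (fun k _ => hlte k), Finset.sum_add_distrib,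
    Finset.sum_const, Finset.card_range, smul_eq_mul, padic_factorial]
end
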